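/- Let n ≥ 1 be an integer, δ > 0, ε ∈ [0,1), and M > 1. Then there exists a linear map L from 2^n×2^n complex matrices to 2×2 complex matrices satisfying T(L(|1⟩⟨1|^{⊗n}), |1⟩⟨1|) ≤ ε and L(π_{M′}^{⊗n}) = π_M for every M′ ∈ [2, 2+δ], if and only if ε ≥ 1 − 1/M. -/

import Mathlib

open Matrix ComplexOrder

/-- The positive semidefinite square root of a positive semidefinite matrix
(the definition removed from Mathlib, restored with its old meaning). -/
noncomputable def Matrix.PosSemidef.sqrt {n : Type*} [Fintype n] [DecidableEq n]
    {A : Matrix n n ℂ} (hA : A.PosSemidef) : Matrix n n ℂ :=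
  hA.1.eigenvectorUnitary.1 * diagonal ((↑) ∘ (√·) ∘ hA.1.eigenvalues) *
    (star hA.1.eigenvectorUnitary : Matrix n n ℂ)

/-- Trace norm of a complex matrix: the trace of `sqrt(AᴴA)` (sum of singular values). -/
noncomputable def traceNorm {n : Type*} [Fintype n] [DecidableEq n]
    (A : Matrix n n ℂ) : ℝ :=
  ((Matrix.posSemidef_conjTranspose_mul_self A).sqrt.trace).re

/-- Trace distance `T(X,Y) = ‖X - Y‖₁ / 2`. -/
noncomputable def traceDist {n : Type*} [Fintype n] [DecidableEq n]
    (X Y : Matrix n n ℂ) : ℝ :=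
  traceNorm (X - Y) / 2

/-- A density matrix: positive semidefinite with unit trace. -/
def IsDensityMatrix {n : Type*} [Fintype n] (ρ : Matrix n n ℂ) : Prop :=
  ρ.PosSemidef ∧ ρ.trace = 1

/-- The battery Gibbs state `π_M = diag(1 - 1/M, 1/M)`. -/
noncomputable def piM (M : ℝ) : Matrix (Fin 2) (Fin 2) ℂ :=
  Matrix.diagonal ![((1 - 1/M : ℝ) : ℂ), ((1/M : ℝ) : ℂ)]

/-- The excited battery state `|1⟩⟨1| = diag(0,1)`. -/
def ket1 : Matrix (Fin 2) (Fin 2) ℂ :=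
  Matrix.diagonal ![0, 1]

/-- A test (POVM effect): `0 ≤ E ≤ I`. -/
def IsTest {n : Type*} [Fintype n] [DecidableEq n] (E : Matrix n n ℂ) : Prop :=
  E.PosSemidef ∧ (1 - E).PosSemidef

/-- Choi matrix `Σ_{ij} E_{ij} ⊗ F(E_{ij})` of a linear map on matrices. -/
noncomputable def choiMatrix {n m : Type*} [Fintype n] [DecidableEq n] [Fintype m]
    (F : Matrix n n ℂ →ₗ[ℂ] Matrix m m ℂ) :
    Matrix (n × m) (n × m) ℂ :=
  fun p q => F (Matrix.single p.1 q.1 1) p.2 q.2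

/-- Completely positive (positive semidefinite Choi matrix) and trace preserving. -/
def IsCPTP {n m : Type*} [Fintype n] [DecidableEq n] [Fintype m]
    (F : Matrix n n ℂ →ₗ[ℂ] Matrix m m ℂ) : Prop :=
  (choiMatrix F).PosSemidef ∧ ∀ X, (F X).trace = X.trace

/-- `n`-fold Kronecker (tensor) power of a `2 × 2` matrix, indexed by bit strings. -/
def tensPow (A : Matrix (Fin 2) (Fin 2) ℂ) (n : ℕ) :
    Matrix (Fin n → Fin 2) (Fin n → Fin 2) ℂ :=
  fun x y => ∏ i, A (x i) (y i)

/-- `ε`-ball (in trace distance) of density matrices around a set `𝓟`. -/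
noncomputable def metBall {n : Type*} [Fintype n] [DecidableEq n]
    (ε : ℝ) (P : Set (Matrix n n ℂ)) : Set (Matrix n n ℂ) :=
  {ω | IsDensityMatrix ω ∧ ∃ ρ ∈ P, traceDist ω ρ ≤ ε}

/-! The entries of `L (diag(1 - t, t)^{⊗n})` are polynomials in `t`. If `L (π_{M'}^{⊗n}) = π_M`
for the infinitely many values `t = 1/M'`, `M' ∈ [2, 2 + δ]`, the polynomial identity persists at
`t = 1`, i.e. `L (|1⟩⟨1|^{⊗n}) = π_M`, which lies at trace distance `1 - 1/M` from `|1⟩⟨1|`.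
Conversely, the replacement map `X ↦ tr(X) π_M` attains that distance. -/

open scoped MatrixOrder

theorem Matrix.PosSemidef.sqrt_eq_cfcSqrt {n : Type*} [Fintype n] [DecidableEq n]
    {A : Matrix n n ℂ} (hA : A.PosSemidef) : hA.sqrt = CFC.sqrt A := by
  rw [CFC.sqrt_eq_real_sqrt A (nonneg_iff_posSemidef.mpr hA), cfcₙ_eq_cfc, hA.1.cfc_eq]
  rfl

theorem traceNorm_diagonal {n : Type*} [Fintype n] [DecidableEq n] (d : n → ℂ) :
    traceNorm (diagonal d) = ∑ i, ‖d i‖ := by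
  have hsqrt : CFC.sqrt ((diagonal d)ᴴ * diagonal d) = diagonal fun i ↦ (‖d i‖ : ℂ) := by
    refine CFC.sqrt_unique ?_ (nonneg_iff_posSemidef.mpr (posSemidef_diagonal_iff.mpr
      fun i ↦ Complex.zero_le_real.mpr (norm_nonneg _)))
    rw [diagonal_conjTranspose, diagonal_mul_diagonal, diagonal_mul_diagonal]
    congr 1
    ext i
    simp [Complex.conj_mul', sq]
  rw [traceNorm, PosSemidef.sqrt_eq_cfcSqrt, hsqrt, trace_diagonal]
  simp

theorem traceDist_diagonal {n : Type*} [Fintype n] [DecidableEq n] (d e : n → ℂ) :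
    traceDist (diagonal d) (diagonal e) = (∑ i, ‖d i - e i‖) / 2 := by
  rw [traceDist, diagonal_sub, traceNorm_diagonal]

theorem traceDist_piM_ket1 (M : ℝ) : traceDist (piM M) ket1 = |1 - 1 / M| := by
  have h : ((1 / M : ℝ) : ℂ) - 1 = -((1 - 1 / M : ℝ) : ℂ) := by push_cast; ring
  rw [piM, ket1, traceDist_diagonal]
  simp only [Fin.sum_univ_two, cons_val_zero, cons_val_one, cons_val_fin_one, sub_zero, h,
    norm_neg, Complex.norm_real, Real.norm_eq_abs]
  ring

theorem trace_tensPow (A : Matrix (Fin 2) (Fin 2) ℂ) (n : ℕ) :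
    (tensPow A n).trace = A.trace ^ n := by
  simp only [trace, diag, tensPow, Fintype.sum_pow]

theorem trace_piM (M : ℝ) : (piM M).trace = 1 := by
  simp [piM, trace_diagonal, Fin.sum_univ_two]

theorem trace_ket1 : ket1.trace = 1 := by
  simp [ket1, trace_diagonal, Fin.sum_univ_two]

open Polynomial

theorem exists_polynomial_eval_eq_map_tensPow (A : Matrix (Fin 2) (Fin 2) ℂ[X]) (n : ℕ)
    (f : Matrix (Fin n → Fin 2) (Fin n → Fin 2) ℂ →ₗ[ℂ] ℂ) :
    ∃ p : ℂ[X], ∀ t, p.eval t = f (tensPow (A.map (eval t)) n) := by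
  refine ⟨∑ x, ∑ y, C (f (single x y 1)) * ∏ i, A (x i) (y i), fun t ↦ ?_⟩
  conv_rhs => rw [matrix_eq_sum_single (tensPow _ n)]
  simp only [eval_finsetSum, eval_mul, eval_C, eval_prod, map_sum]
  refine Finset.sum_congr rfl fun x _ ↦ Finset.sum_congr rfl fun y _ ↦ ?_
  have hsingle (c : ℂ) : single x y c = c • single x y 1 := by
    rw [smul_single, smul_eq_mul, mul_one]
  rw [hsingle (tensPow _ n x y), map_smul, smul_eq_mul, mul_comm]
  rfl

theorem map_tensPow_eq_of_infinite {m m' : Type*} (A : Matrix (Fin 2) (Fin 2) ℂ[X]) (n : ℕ)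
    (L : Matrix (Fin n → Fin 2) (Fin n → Fin 2) ℂ →ₗ[ℂ] Matrix m m' ℂ) (B : Matrix m m' ℂ)
    {S : Set ℂ} (hS : S.Infinite) (hB : ∀ t ∈ S, L (tensPow (A.map (eval t)) n) = B) (t : ℂ) :
    L (tensPow (A.map (eval t)) n) = B := by
  ext i j
  obtain ⟨p, hp⟩ := exists_polynomial_eval_eq_map_tensPow A n (entryLinearMap ℂ ℂ i j ∘ₗ L)
  have hpC : p = C (B i j) :=
    eq_of_infinite_eval_eq _ _ <| hS.mono fun s hs ↦ by simp [hp, hB s hs]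
  simpa [hpC] using (hp t).symm

theorem piM_eq_map_eval (M : ℝ) :
    piM M = (diagonal ![1 - X, X]).map (eval ((1 / M : ℝ) : ℂ)) := by
  rw [piM, diagonal_map (by simp)]
  congr 1
  ext k
  fin_cases k <;> simp

theorem ket1_eq_map_eval : ket1 = (diagonal ![1 - X, X]).map (eval 1) := by
  rw [ket1, diagonal_map (by simp)]
  congr 1
  ext k
  fin_cases k <;> simp

theorem map_tensPow_ket1_eq_of_infinite {m m' : Type*} {n : ℕ}
    (L : Matrix (Fin n → Fin 2) (Fin n → Fin 2) ℂ →ₗ[ℂ] Matrix m m' ℂ) (B : Matrix m m' ℂ)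
    {s : Set ℝ} (hs : s.Infinite) (hL : ∀ M ∈ s, L (tensPow (piM M) n) = B) :
    L (tensPow ket1 n) = B := by
  have hinj : Function.Injective fun M : ℝ ↦ ((1 / M : ℝ) : ℂ) := fun a b hab ↦ by
    simpa using hab
  rw [ket1_eq_map_eval]
  refine map_tensPow_eq_of_infinite _ n L B (hs.image hinj.injOn) ?_ 1
  rintro _ ⟨M, hM, rfl⟩
  rw [← piM_eq_map_eval, hL M hM]

theorem stmt_19_general (n : ℕ) (δ ε M : ℝ) (hδ : 0 < δ) (hM : 1 < M) :
    (∃ L : Matrix (Fin n → Fin 2) (Fin n → Fin 2) ℂ →ₗ[ℂ]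
        Matrix (Fin 2) (Fin 2) ℂ,
      traceDist (L (tensPow ket1 n)) ket1 ≤ ε ∧
      ∀ M' ∈ Set.Icc (2:ℝ) (2 + δ), L (tensPow (piM M') n) = piM M) ↔
      ε ≥ 1 - 1/M := by
  have hdist : traceDist (piM M) ket1 = 1 - 1 / M := by
    rw [traceDist_piM_ket1, abs_of_nonneg (sub_nonneg.mpr ((div_le_one (by linarith)).mpr hM.le))]
  constructor
  · rintro ⟨L, hLε, hL⟩
    rwa [map_tensPow_ket1_eq_of_infinite L _ (Set.Icc_infinite (by linarith)) hL, hdist] at hLε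
  · intro hε
    refine ⟨(traceLinearMap _ ℂ ℂ).smulRight (piM M), ?_, fun M' _ ↦ ?_⟩
    · simpa [trace_tensPow, trace_ket1, hdist] using hε
    · simp [trace_tensPow, trace_piM]

/-- clean-battery work extraction from `n` copies of the
uncertain excited battery is trivial: achievable iff `ε ≥ 1 - 1/M`. -/
theorem stmt_19 (n : ℕ) (hn : 1 ≤ n) (δ ε M : ℝ) (hδ : 0 < δ)
    (hε : ε ∈ Set.Ico (0:ℝ) 1) (hM : 1 < M) :
    (∃ L : Matrix (Fin n → Fin 2) (Fin n → Fin 2) ℂ →ₗ[ℂ]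
        Matrix (Fin 2) (Fin 2) ℂ,
      traceDist (L (tensPow ket1 n)) ket1 ≤ ε ∧
      ∀ M' ∈ Set.Icc (2:ℝ) (2 + δ), L (tensPow (piM M') n) = piM M) ↔
      ε ≥ 1 - 1/M :=
  stmt_19_general n δ ε M hδ hM
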